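/- With notation as in the standard-form Groebner basis construction for a binary [n,k,d]-code C correcting t errors, and a received word v with at most t errors: the remainder of X^v − 1 on division by the reduced Groebner basis G has weight more than t if and only if at least one nonzero coordinate of the error vector lies among the first k coordinates of v. -/

import Mathlib

/-! The ring map `X^a ↦ [a mod 2]` into the group algebra `K[F₂ⁿ/C]` kills every generator of
`I_C`, so `X^v − 1 ≡ X^e − 1` forces `v − e ∈ C`. Since the leading monomial of
`X_i − X^{m_i}` is `X_i`, a remainder contains none of `X_1, …, X_k`, so `e` vanishes on the
information positions, and `e − ε` is a codeword for the error `ε = v − c`. If `ε` vanishes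
there too, so does the codeword `e − ε`, which is then `0` by the standard form, and
`w(e) = w(ε) ≤ t`. Otherwise `e − ε ≠ 0`, so `d ≤ w(e − ε) ≤ w(e) + w(ε)` gives `w(e) > t`. -/

open MvPolynomial
open scoped MonomialOrder

/-- The leading (multidegree) exponent of a polynomial with respect to a monomial order. -/
noncomputable def leadExp {σ K : Type*} [Field K] (m : MonomialOrder σ)
    (f : MvPolynomial σ K) : σ →₀ ℕ :=
  m.toSyn.symm (f.support.sup fun d => m.toSyn d)

/-- The leading term of a polynomial with respect to a monomial order. -/
noncomputable def leadTerm {σ K : Type*} [Field K] (m : MonomialOrder σ)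
    (f : MvPolynomial σ K) : MvPolynomial σ K :=
  monomial (leadExp m f) (f.coeff (leadExp m f))

/-- `G` is a Groebner basis of the ideal `I` for the monomial order `m`. -/
def IsGroebnerBasis {σ K : Type*} [Field K] (m : MonomialOrder σ)
    (I : Ideal (MvPolynomial σ K)) (G : Set (MvPolynomial σ K)) : Prop :=
  G.Finite ∧ G ⊆ (I : Set (MvPolynomial σ K)) ∧
    Ideal.span (leadTerm m '' G) = Ideal.span (leadTerm m '' {f | f ∈ I ∧ f ≠ 0})

/-- A reduced Groebner basis: all elements monic, and no monomial of an element lies in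
the ideal generated by the leading terms of the other elements. -/
def IsReducedGB {σ K : Type*} [Field K] (m : MonomialOrder σ)
    (G : Set (MvPolynomial σ K)) : Prop :=
  ∀ p ∈ G, p.coeff (leadExp m p) = 1 ∧
    ∀ c ∈ p.support, (monomial c (1 : K)) ∉ Ideal.span (leadTerm m '' (G \ {p}))

/-- `r` is a remainder of `f` on division by `G` (relative to the ideal `I`):
`f - r ∈ I` and no monomial of `r` is divisible by the leading monomial
of any nonzero element of `G`. -/
def IsRemainder {σ K : Type*} [Field K] (m : MonomialOrder σ)
    (I : Ideal (MvPolynomial σ K)) (G : Set (MvPolynomial σ K))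
    (f r : MvPolynomial σ K) : Prop :=
  f - r ∈ I ∧ ∀ c ∈ r.support, ∀ g ∈ G, g ≠ 0 → ¬ leadExp m g ≤ c

/-- The exponent vector in `ℕ^n` associated with a binary word. -/
noncomputable def expOf {n : ℕ} (c : Fin n → ZMod 2) : Fin n →₀ ℕ :=
  Finsupp.equivFunOnFinite.symm fun i => (c i).val

/-- The monomial `X^c` associated with a binary word `c`. -/
noncomputable def Xw (K : Type*) [Field K] {n : ℕ} (c : Fin n → ZMod 2) :
    MvPolynomial (Fin n) K :=
  monomial (expOf c) 1

/-- The code ideal `I_C = ⟨X^c − X^{c'} : c − c' ∈ C⟩ + ⟨X_i^2 − 1 : 1 ≤ i ≤ n⟩`. -/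
noncomputable def codeIdeal (K : Type*) [Field K] {n : ℕ}
    (C : Submodule (ZMod 2) (Fin n → ZMod 2)) : Ideal (MvPolynomial (Fin n) K) :=
  Ideal.span ({f | ∃ c c' : Fin n → ZMod 2, c - c' ∈ C ∧ f = Xw K c - Xw K c'} ∪
    {f | ∃ i : Fin n, f = X i ^ 2 - 1})

/-- `g` is a generating matrix in standard form `(I_k | M)` for the code `C`:
its rows span `C` and its first `k` columns form the identity matrix. -/
def IsStandardGenMatrix {n k : ℕ} (hk : k ≤ n) (C : Submodule (ZMod 2) (Fin n → ZMod 2))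
    (g : Fin k → Fin n → ZMod 2) : Prop :=
  C = Submodule.span (ZMod 2) (Set.range g) ∧
    ∀ i j : Fin k, g i (Fin.castLE hk j) = if i = j then 1 else 0

/-- The word `m_i = (0,…,0, g_{i,k+1},…,g_{i,n})` built from the `i`-th row of `g`. -/
def mrow {n k : ℕ} (g : Fin k → Fin n → ZMod 2) (i : Fin k) : Fin n → ZMod 2 :=
  fun j => if (j : ℕ) < k then 0 else g i j

/-- The set `{X_i − X^{m_i} : 1 ≤ i ≤ k} ∪ {X_j^2 − 1 : k+1 ≤ j ≤ n}`. -/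
noncomputable def gbSet (K : Type*) [Field K] {n k : ℕ} (hk : k ≤ n)
    (g : Fin k → Fin n → ZMod 2) : Set (MvPolynomial (Fin n) K) :=
  (Set.range fun i : Fin k => X (Fin.castLE hk i) - Xw K (mrow g i)) ∪
    {f | ∃ j : Fin n, k ≤ (j : ℕ) ∧ f = X j ^ 2 - 1}

theorem lt_hammingNorm_of_sub_mem {ι β : Type*} [Fintype ι] [AddCommGroup β] [DecidableEq β]
    {C : Set (ι → β)} {d t : ℕ} (hd : ∀ x ∈ C, x ≠ 0 → d ≤ hammingNorm x) (ht : 2 * t + 1 ≤ d)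
    {e ε : ι → β} (hε : hammingNorm ε ≤ t) (hmem : e - ε ∈ C) (hne : e ≠ ε) :
    t < hammingNorm e := by
  have hdist := hd _ hmem (sub_ne_zero.mpr hne)
  have htri : hammingNorm (e - ε) ≤ hammingNorm ε + hammingNorm e :=
    calc hammingNorm (e - ε) = hammingDist ε e := by
          rw [hammingDist_eq_hammingNorm, neg_add_eq_sub]
      _ ≤ hammingDist ε 0 + hammingDist 0 e := hammingDist_triangle _ _ _
      _ = hammingNorm ε + hammingNorm e := by rw [hammingDist_zero_right, hammingDist_zero_left]
  omega

theorem IsStandardGenMatrix.eq_zero_of_mem {n k : ℕ} {hk : k ≤ n}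
    {C : Submodule (ZMod 2) (Fin n → ZMod 2)} {g : Fin k → Fin n → ZMod 2}
    (hg : IsStandardGenMatrix hk C g) {x : Fin n → ZMod 2} (hx : x ∈ C)
    (hinfo : ∀ j : Fin n, (j : ℕ) < k → x j = 0) : x = 0 := by
  rw [hg.1, Submodule.mem_span_range_iff_exists_fun] at hx
  obtain ⟨a, rfl⟩ := hx
  have hcoord (j : Fin k) : (∑ i, a i • g i) (Fin.castLE hk j) = a j := by
    simp [Finset.sum_apply, hg.2]
  have ha : a = 0 := funext fun j => by
    rw [← hcoord j]
    exact hinfo _ j.isLt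
  simp [ha]

section QuotientEval

variable (K : Type*) [Field K] {n : ℕ} (C : Submodule (ZMod 2) (Fin n → ZMod 2))

noncomputable def expToQuotient : (Fin n →₀ ℕ) →+ (Fin n → ZMod 2) ⧸ C :=
  C.mkQ.toAddMonoidHom.comp
    (Finsupp.coeFnAddHom.comp (Finsupp.mapRange.addMonoidHom (Nat.castAddMonoidHom (ZMod 2))))

noncomputable def quotientEval :
    MvPolynomial (Fin n) K →+* AddMonoidAlgebra K ((Fin n → ZMod 2) ⧸ C) :=
  AddMonoidAlgebra.mapDomainRingHom K (expToQuotient C)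

variable {K C}

theorem quotientEval_monomial (a : Fin n →₀ ℕ) (r : K) :
    quotientEval K C (monomial a r) = AddMonoidAlgebra.single (expToQuotient C a) r :=
  AddMonoidAlgebra.mapDomain_single

theorem expToQuotient_apply (a : Fin n →₀ ℕ) :
    expToQuotient C a = Submodule.Quotient.mk fun i => (a i : ZMod 2) :=
  rfl

theorem expToQuotient_expOf (w : Fin n → ZMod 2) :
    expToQuotient C (expOf w) = Submodule.Quotient.mk w := by
  rw [expToQuotient_apply]
  congr 1
  funext i
  exact ZMod.natCast_zmod_val (w i)

theorem quotientEval_Xw (w : Fin n → ZMod 2) :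
    quotientEval K C (Xw K w) = AddMonoidAlgebra.single (Submodule.Quotient.mk w) 1 := by
  rw [Xw, quotientEval_monomial, expToQuotient_expOf]

theorem quotientEval_X_sq (i : Fin n) : quotientEval K C (X i ^ 2) = 1 := by
  have h2 : (fun j => ((Finsupp.single i 2 : Fin n →₀ ℕ) j : ZMod 2)) = 0 := by
    funext j
    rw [Finsupp.single_apply]
    split_ifs <;> rfl
  rw [X_pow_eq_monomial, quotientEval_monomial, expToQuotient_apply, h2,
    Submodule.Quotient.mk_zero, AddMonoidAlgebra.one_def]

theorem codeIdeal_le_ker_quotientEval : codeIdeal K C ≤ RingHom.ker (quotientEval K C) := by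
  rw [codeIdeal, Ideal.span_le]
  rintro f (⟨a, b, hab, rfl⟩ | ⟨i, rfl⟩) <;> rw [SetLike.mem_coe, RingHom.mem_ker, map_sub]
  · rw [quotientEval_Xw, quotientEval_Xw, (Submodule.Quotient.eq C).mpr hab, sub_self]
  · rw [quotientEval_X_sq, map_one, sub_self]

theorem sub_mem_of_Xw_sub_Xw_mem_codeIdeal {a b : Fin n → ZMod 2}
    (h : Xw K a - Xw K b ∈ codeIdeal K C) : a - b ∈ C := by
  have h0 := codeIdeal_le_ker_quotientEval h
  rw [RingHom.mem_ker, map_sub, quotientEval_Xw, quotientEval_Xw, sub_eq_zero,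
    AddMonoidAlgebra.single_left_inj one_ne_zero] at h0
  exact (Submodule.Quotient.eq C).mp h0

end QuotientEval

theorem Finsupp.toLex_lt_toLex_single_of_forall_le {σ : Type*} [LinearOrder σ]
    {x : σ →₀ ℕ} {j : σ} (hx : ∀ i ≤ j, x i = 0) : toLex x < toLex (Finsupp.single j 1) := by
  refine Finsupp.Lex.lt_iff.mpr ⟨j, fun i hi => ?_, ?_⟩
  · simp [hx i hi.le, Finsupp.single_eq_of_ne hi.ne]
  · simp [hx j le_rfl]

section GroebnerBasis

variable {K : Type*} [Field K] {n k : ℕ}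

theorem expOf_apply (w : Fin n → ZMod 2) (i : Fin n) : expOf w i = (w i).val :=
  rfl

theorem expOf_mem_support_Xw_sub_one {w : Fin n → ZMod 2} (hw : expOf w ≠ 0) :
    expOf w ∈ (Xw K w - 1).support := by
  rw [mem_support_iff, coeff_sub, Xw, coeff_monomial, if_pos rfl, coeff_one, if_neg hw.symm,
    sub_zero]
  exact one_ne_zero

theorem degree_X_sub_Xw_mrow (hk : k ≤ n) (g : Fin k → Fin n → ZMod 2) (i : Fin k) :
    MonomialOrder.lex.degree (X (Fin.castLE hk i) - Xw K (mrow g i)) =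
      Finsupp.single (Fin.castLE hk i) 1 := by
  classical
  have hmrow : ∀ j ≤ Fin.castLE hk i, expOf (mrow g i) j = 0 := fun j hj => by
    have hjk : (j : ℕ) < k := lt_of_le_of_lt (Fin.le_def.mp hj) i.isLt
    simp [expOf_apply, mrow, hjk]
  have hlt : MonomialOrder.lex.degree (Xw K (mrow g i)) ≺[MonomialOrder.lex]
      MonomialOrder.lex.degree (X (R := K) (Fin.castLE hk i)) := by
    rw [Xw, MonomialOrder.degree_monomial, if_neg one_ne_zero, MonomialOrder.degree_X,
      MonomialOrder.lex_lt_iff]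
    exact Finsupp.toLex_lt_toLex_single_of_forall_le hmrow
  rw [MonomialOrder.degree_sub_of_lt hlt, MonomialOrder.degree_X]

theorem IsRemainder.apply_eq_zero_of_lt {hk : k ≤ n} {g : Fin k → Fin n → ZMod 2}
    {I : Ideal (MvPolynomial (Fin n) K)} {f : MvPolynomial (Fin n) K} {e : Fin n → ZMod 2}
    (hrem : IsRemainder MonomialOrder.lex I (gbSet K hk g) f (Xw K e - 1)) :
    ∀ j : Fin n, (j : ℕ) < k → e j = 0 := by
  intro j hj
  by_contra hej
  set i : Fin k := ⟨j, hj⟩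
  have hji : Fin.castLE hk i = j := rfl
  have hdeg := degree_X_sub_Xw_mrow (K := K) hk g i
  have hpos : 1 ≤ expOf e j := Nat.one_le_iff_ne_zero.mpr ((ZMod.val_ne_zero _).mpr hej)
  have hsupp : expOf e ∈ (Xw K e - 1).support :=
    expOf_mem_support_Xw_sub_one fun h => by simp [h] at hpos
  refine hrem.2 _ hsupp _ (Or.inl ⟨i, rfl⟩) (fun h0 => ?_) ?_
  · simp only at h0
    rw [h0, MonomialOrder.degree_zero, eq_comm, Finsupp.single_eq_zero] at hdeg
    exact one_ne_zero hdeg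
  · rw [leadExp, ← MonomialOrder.degree, hdeg, Finsupp.single_le_iff, hji]
    exact hpos

end GroebnerBasis

/-- with `C` a `t`-error-correcting binary `[n,k,d]` code and `v` a received
word at distance `≤ t` from the codeword `c`, the remainder `X^e − 1` of `X^v − 1` on
division by the standard-form reduced Groebner basis has weight `w(e) > t` iff some
nonzero coordinate of the error vector `v − c` lies among the first `k` coordinates. -/
theorem high_weight_remainder_iff_error_in_info_part (K : Type*) [Field K]
    {n k : ℕ} (hk : k ≤ n)
    (C : Submodule (ZMod 2) (Fin n → ZMod 2)) (g : Fin k → Fin n → ZMod 2)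
    (hg : IsStandardGenMatrix hk C g) (d t : ℕ)
    (hd : ∀ x ∈ C, x ≠ 0 → d ≤ hammingNorm x) (ht : 2 * t + 1 ≤ d)
    (v : Fin n → ZMod 2) (c : Fin n → ZMod 2) (hc : c ∈ C)
    (hvc : hammingDist v c ≤ t)
    (e : Fin n → ZMod 2)
    (hrem : IsRemainder MonomialOrder.lex (codeIdeal K C) (gbSet K hk g)
      (Xw K v - 1) (Xw K e - 1)) :
    t < hammingNorm e ↔ ∃ j : Fin n, (j : ℕ) < k ∧ (v - c) j ≠ 0 := by
  have he : ∀ j : Fin n, (j : ℕ) < k → e j = 0 := hrem.apply_eq_zero_of_lt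
  have hve : v - e ∈ C :=
    sub_mem_of_Xw_sub_Xw_mem_codeIdeal (by simpa only [sub_sub_sub_cancel_right] using hrem.1)
  have hε : hammingNorm (v - c) ≤ t := by
    rwa [hammingDist_comm, hammingDist_eq_hammingNorm, neg_add_eq_sub] at hvc
  have hmem : e - (v - c) ∈ C := by
    rw [show e - (v - c) = c - (v - e) by abel]
    exact C.sub_mem hc hve
  constructor
  · intro hlt
    by_contra! hinfo
    have heq : e = v - c :=
      sub_eq_zero.mp (hg.eq_zero_of_mem hmem fun j hj => by simp [he j hj, hinfo j hj])
    exact absurd hε (heq ▸ hlt).not_ge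
  · rintro ⟨j, hj, hne⟩
    exact lt_hammingNorm_of_sub_mem hd ht hε hmem fun heq => hne (heq ▸ he j hj)
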